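/- Transitivity of subtyping is admissible: if A ≤ B and B ≤ C are derivable in the subtyping system, then A ≤ C is derivable. -/
import Mathlib


inductive Ty : Type
| arr : Ty → Ty → Ty
| inter : Ty → Ty → Ty
| union : Ty → Ty → Ty
| bot : Ty
deriving DecidableEq

inductive Subty : Ty → Ty → Prop
| arr {A1 A2 B1 B2} : Subty B1 A1 → Subty A2 B2 → Subty (Ty.arr A1 A2) (Ty.arr B1 B2)
| interL1 {A1 A2 B} : Subty A1 B → Subty (Ty.inter A1 A2) B
| interL2 {A1 A2 B} : Subty A2 B → Subty (Ty.inter A1 A2) B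
| interR {A B1 B2} : Subty A B1 → Subty A B2 → Subty A (Ty.inter B1 B2)
| botL {A} : Subty Ty.bot A
| unionL {A1 A2 B} : Subty A1 B → Subty A2 B → Subty (Ty.union A1 A2) B
| unionR1 {A B1 B2} : Subty A B1 → Subty A (Ty.union B1 B2)
| unionR2 {A B1 B2} : Subty A B2 → Subty A (Ty.union B1 B2)

private def Ty.sz : Ty → Nat
| .arr a b => Ty.sz a + Ty.sz b + 1
| .inter a b => Ty.sz a + Ty.sz b + 1
| .union a b => Ty.sz a + Ty.sz b + 1
| .bot => 1

private theorem aux : ∀ n A B C, Ty.sz B ≤ n → Subty A B → Subty B C → Subty A C := by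
  intro n
  induction n with
  | zero => intro A B C h; cases B <;> simp [Ty.sz] at h
  | succ n ih =>
    intro A B C hB h1 h2
    induction h1 generalizing C with
    | botL => exact .botL
    | interL1 _ ih1 => exact .interL1 (ih1 _ hB h2)
    | interL2 _ ih1 => exact .interL2 (ih1 _ hB h2)
    | unionL _ _ ih1 ih2 => exact .unionL (ih1 _ hB h2) (ih2 _ hB h2)
    | @arr A1 A2 B1 B2 f g _ _ =>
      clear * - hB f g h2 ih
      simp [Ty.sz] at hB
      generalize hE : Ty.arr B1 B2 = B' at h2
      induction h2 with
      | arr f' g' =>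
        cases hE
        exact .arr (ih _ _ _ (by omega) f' f) (ih _ _ _ (by omega) g g')
      | interR _ _ ihh1 ihh2 => exact .interR (ihh1 hE) (ihh2 hE)
      | unionR1 _ ihh => exact .unionR1 (ihh hE)
      | unionR2 _ ihh => exact .unionR2 (ihh hE)
      | _ => exact absurd hE (by simp_all)
    | @interR A' B1 B2 f g _ _ =>
      clear * - hB f g h2 ih
      simp [Ty.sz] at hB
      generalize hE : Ty.inter B1 B2 = B' at h2
      induction h2 with
      | interL1 h => cases hE; exact ih _ _ _ (by omega) f h
      | interL2 h => cases hE; exact ih _ _ _ (by omega) g h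
      | interR _ _ ihh1 ihh2 => exact .interR (ihh1 hE) (ihh2 hE)
      | unionR1 _ ihh => exact .unionR1 (ihh hE)
      | unionR2 _ ihh => exact .unionR2 (ihh hE)
      | _ => exact absurd hE (by simp_all)
    | @unionR1 A' B1 B2 f _ =>
      clear * - hB f h2 ih
      simp [Ty.sz] at hB
      generalize hE : Ty.union B1 B2 = B' at h2
      induction h2 with
      | unionL h _ => cases hE; exact ih _ _ _ (by omega) f h
      | interR _ _ ihh1 ihh2 => exact .interR (ihh1 hE) (ihh2 hE)
      | unionR1 _ ihh => exact .unionR1 (ihh hE)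
      | unionR2 _ ihh => exact .unionR2 (ihh hE)
      | _ => exact absurd hE (by simp_all)
    | @unionR2 A' B1 B2 f _ =>
      clear * - hB f h2 ih
      simp [Ty.sz] at hB
      generalize hE : Ty.union B1 B2 = B' at h2
      induction h2 with
      | unionL _ h => cases hE; exact ih _ _ _ (by omega) f h
      | interR _ _ ihh1 ihh2 => exact .interR (ihh1 hE) (ihh2 hE)
      | unionR1 _ ihh => exact .unionR1 (ihh hE)
      | unionR2 _ ihh => exact .unionR2 (ihh hE)
      | _ => exact absurd hE (by simp_all)

theorem sub_trans (A B C : Ty) (h1 : Subty A B) (h2 : Subty B C) : Subty A C :=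
  aux (Ty.sz B) A B C le_rfl h1 h2
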